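/- Let n ≥ 1 and let g : 𝕋 → 𝕋 be the map sending z to the n-th root of unity ω^l closest to z (defining g arbitrarily on the measure-zero set of ties). Let 𝓔 denote the conditional expectation onto the σ-algebra generated by g, with respect to normalized Haar measure on 𝕋. Then for every integer k, 𝓔(z^k) = sinc(kπ/n) · g^k, where sinc(x) = sin(x)/x for x ≠ 0 and sinc(0) = 1. -/

import Mathlib

/-!
`nearestRoot n` takes finitely many values, so the σ-algebra it generates is the partition of
the circle into its fibres, and the conditional expectation of `f` is, on each fibre, the average
of `f` over that fibre. The fibre over `m / n` is, up to an endpoint, the arc of length `1 / n`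
centred at `m / n`; translating it to `[-1/(2n), 1/(2n)]` pulls out the factor
`fourier k (m / n)`, and the average of `exp (2πikt)` over the centred arc is `sinc (kπ/n)`.
-/

open MeasureTheory

/-- `sinc x = sin x / x`, `sinc 0 = 1`. -/
noncomputable def sinc (x : ℝ) : ℝ := if x = 0 then 1 else Real.sin x / x

/-- The map sending a point of the circle `𝕋 = ℝ/ℤ` to the nearest `n`-th root of unity
(point of `(1/n)ℤ/ℤ`), using the representative in `[0,1)` and rounding (ties are
resolved arbitrarily, by `round`). -/
noncomputable def nearestRoot (n : ℕ) (x : AddCircle (1 : ℝ)) : AddCircle (1 : ℝ) :=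
  (((round ((n : ℝ) * ((AddCircle.equivIco 1 0 x : ℝ)))) : ℝ) / n : ℝ)

open Set

section FiniteRange

variable {α β E : Type*} [MeasurableSpace β] [MeasurableSingletonClass β]
  [NormedAddCommGroup E] {g : α → β}

lemma stronglyMeasurable_comp_comap_of_finite_range (hg : (range g).Finite) (φ : β → E) :
    StronglyMeasurable[MeasurableSpace.comap g ‹_›] (φ ∘ g) := by
  have : Countable (range g) := hg.countable.to_subtype
  have hφ : StronglyMeasurable (fun b : range g => φ b) := .of_discrete
  exact hφ.comp_measurable ((comap_measurable g).subtype_mk (h := mem_range_self))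

variable [MeasurableSpace α] [NormedSpace ℝ E] [CompleteSpace E] {μ : Measure α}
  [IsFiniteMeasure μ]

theorem condExp_comap_ae_eq_fiber_average (hg : Measurable g) (hfin : (range g).Finite)
    {f : α → E} (hf : Integrable f μ) :
    μ[f | MeasurableSpace.comap g ‹_›] =ᵐ[μ]
      fun x => (μ.real (g ⁻¹' {g x}))⁻¹ • ∫ y in g ⁻¹' {g x}, f y ∂μ := by
  set φ : β → E := fun b => (μ.real (g ⁻¹' {b}))⁻¹ • ∫ y in g ⁻¹' {b}, f y ∂μ
  have hφ_meas := stronglyMeasurable_comp_comap_of_finite_range hfin φ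
  have hφ_int : Integrable (φ ∘ g) μ := by
    obtain ⟨C, hC⟩ := (hfin.image fun b => ‖φ b‖).bddAbove
    refine .of_bound (hφ_meas.mono hg.comap_le).aestronglyMeasurable C (.of_forall fun x => ?_)
    exact hC ⟨g x, mem_range_self x, rfl⟩
  have hfiber : ∀ b, ∫ x in g ⁻¹' {b}, φ (g x) ∂μ = ∫ x in g ⁻¹' {b}, f x ∂μ := by
    intro b
    have hb : MeasurableSet (g ⁻¹' {b}) := hg (measurableSet_singleton b)
    rw [setIntegral_congr_fun hb fun x hx => congrArg φ hx, setIntegral_const]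
    rcases eq_or_ne (μ.real (g ⁻¹' {b})) 0 with h0 | h0
    · rw [h0, zero_smul, eq_comm]
      exact setIntegral_measure_zero _ ((measureReal_eq_zero_iff).mp h0)
    · exact smul_inv_smul₀ h0 _
  refine (ae_eq_condExp_of_forall_setIntegral_eq hg.comap_le hf
    (fun _ _ _ => hφ_int.integrableOn) ?_ hφ_meas.aestronglyMeasurable).symm
  rintro _ ⟨u, hu, rfl⟩ -
  have hfin' : (u ∩ range g).Finite := hfin.inter_of_right u
  have hunion : g ⁻¹' u = ⋃ b ∈ hfin'.toFinset, g ⁻¹' {b} := by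
    simp only [Finite.mem_toFinset, biUnion_preimage_singleton, preimage_inter_range]
  have hmeas : ∀ b ∈ hfin'.toFinset, MeasurableSet (g ⁻¹' {b}) :=
    fun b _ => hg (measurableSet_singleton b)
  have hdisj := (pairwise_disjoint_fiber g).set_pairwise (hfin'.toFinset : Set β)
  rw [hunion, integral_biUnion_finset _ hmeas hdisj fun _ _ => hφ_int.integrableOn,
    integral_biUnion_finset _ hmeas hdisj fun _ _ => hf.integrableOn]
  exact Finset.sum_congr rfl fun b _ => hfiber b

end FiniteRange

lemma sinc_eq_real_sinc : sinc = Real.sinc := rfl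

lemma integral_exp_mul_mul_I_eq_sinc (c a : ℝ) :
    ∫ t in -a..a, Complex.exp (c * t * Complex.I) = 2 * a * Real.sinc (c * a) := by
  rcases eq_or_ne c 0 with rfl | hc
  · simp [two_mul]
  · have hc' : (c : ℂ) ≠ 0 := by exact_mod_cast hc
    have := intervalIntegral.integral_comp_mul_left (fun t : ℝ => Complex.exp (t * Complex.I)) hc
      (a := -a) (b := a)
    simp only [Complex.ofReal_mul] at this
    rw [this, mul_neg, integral_exp_mul_I_eq_sinc, Complex.real_smul]
    push_cast
    field_simp

namespace AddCircle

variable {T : ℝ} [Fact (0 < T)] {E : Type*} [NormedAddCommGroup E] [NormedSpace ℝ E]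

theorem setIntegral_eq_setIntegral_Ico_inter_preimage (t : ℝ) {A : Set (AddCircle T)}
    (hA : MeasurableSet A) (f : AddCircle T → E) :
    ∫ x in A, f x = ∫ x in Ico t (t + T) ∩ (↑) ⁻¹' A, f x := by
  rw [← integral_indicator hA, ← AddCircle.integral_preimage T t,
    ← setIntegral_indicator (AddCircle.measurable_mk' hA), setIntegral_congr_set Ico_ae_eq_Ioc]
  rfl

end AddCircle

lemma measurable_nearestRoot (n : ℕ) : Measurable (nearestRoot n) := by
  have hround : Measurable fun r : ℝ => ((round ((n : ℝ) * r) : ℤ) : ℝ) := by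
    simp only [round_eq]
    exact Measurable.of_discrete.comp ((measurable_const_mul _).add_const _).floor
  exact AddCircle.measurable_mk'.comp <| ((hround.comp measurable_subtype_coe).comp
    (AddCircle.measurableEquivIco 1 0).measurable).div_const _

lemma finite_range_nearestRoot (n : ℕ) : (range (nearestRoot n)).Finite := by
  refine ((finite_Icc (0 : ℤ) n).image fun m : ℤ => ((m / n : ℝ) : AddCircle (1 : ℝ))).subset ?_
  rintro _ ⟨x, rfl⟩
  obtain ⟨hy₀, hy₁⟩ := (AddCircle.equivIco 1 0 x).2
  set y : ℝ := (AddCircle.equivIco 1 0 x : ℝ)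
  have hny₀ : 0 ≤ (n : ℝ) * y := mul_nonneg n.cast_nonneg hy₀
  have hny₁ : (n : ℝ) * y ≤ n := mul_le_of_le_one_right n.cast_nonneg (by linarith)
  have hlow := sub_half_lt_round ((n : ℝ) * y)
  have hupp := round_le_add_half ((n : ℝ) * y)
  have h₀ : ((0 : ℤ) : ℝ) < round ((n : ℝ) * y) + 1 := by push_cast; linarith
  have h₁ : (round ((n : ℝ) * y) : ℝ) < (n : ℤ) + 1 := by push_cast; linarith
  exact ⟨_, ⟨Int.lt_add_one_iff.mp (by exact_mod_cast h₀),
    Int.lt_add_one_iff.mp (by exact_mod_cast h₁)⟩, rfl⟩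

lemma nearestRoot_coe (n : ℕ) (x : ℝ) :
    nearestRoot n (x : AddCircle (1 : ℝ)) = ((round ((n : ℝ) * x) : ℝ) / n : ℝ) := by
  rcases n.eq_zero_or_pos with rfl | hn
  · simp [nearestRoot]
  have hfract : (AddCircle.equivIco 1 0 (x : AddCircle (1 : ℝ)) : ℝ) = Int.fract x := by
    simp [AddCircle.coe_equivIco_mk_apply]
  have hround : round ((n : ℝ) * Int.fract x) = round ((n : ℝ) * x) - n * ⌊x⌋ := by
    rw [← round_sub_intCast]; congr 1; push_cast [Int.fract]; ring
  have hn' : (n : ℝ) ≠ 0 := by positivity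
  have hfloor : ((⌊x⌋ : ℝ) : AddCircle (1 : ℝ)) = 0 :=
    (AddCircle.coe_eq_zero_iff 1).mpr ⟨⌊x⌋, by simp⟩
  rw [nearestRoot, hfract, hround, Int.cast_sub, Int.cast_mul, Int.cast_natCast, sub_div,
    mul_div_cancel_left₀ _ hn', AddCircle.coe_sub, hfloor, sub_zero]

lemma injOn_coe_intCast_div {n : ℕ} (hn : 0 < n) (m : ℤ) :
    InjOn (fun r : ℤ => ((r / n : ℝ) : AddCircle (1 : ℝ))) (Ico m (m + n)) := by
  have hn' : (0 : ℝ) < n := by exact_mod_cast hn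
  have hmem : ∀ r ∈ Ico m (m + n), (r / n : ℝ) ∈ Ico (m / n : ℝ) (m / n + 1) := by
    rintro r ⟨hmr, hrm⟩
    have hmr' : (m : ℝ) ≤ r := by exact_mod_cast hmr
    have hrm' : (r : ℝ) < m + n := by exact_mod_cast hrm
    constructor
    · gcongr
    · rwa [div_add_one hn'.ne', div_lt_div_iff_of_pos_right hn']
  intro r hr s hs h
  have := (AddCircle.coe_eq_coe_iff_of_mem_Ico (hmem r hr) (hmem s hs)).mp h
  rw [div_left_inj' hn'.ne'] at this
  exact_mod_cast this

/-- Starting the period at the left end `(m - 1/2) / n` of the arc around `m / n` makes the fibre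
inside it a single interval, closed on the left because `round` breaks ties upwards. -/
lemma Ico_inter_coe_preimage_nearestRoot {n : ℕ} (hn : 0 < n) (m : ℤ) :
    Ico ((m - 1 / 2) / n : ℝ) ((m - 1 / 2) / n + 1) ∩
        (↑) ⁻¹' (nearestRoot n ⁻¹' {((m / n : ℝ) : AddCircle (1 : ℝ))}) =
      Ico ((m - 1 / 2) / n : ℝ) ((m + 1 / 2) / n) := by
  have hn' : (1 : ℝ) ≤ n := by exact_mod_cast hn
  ext x
  simp only [mem_inter_iff, mem_preimage, mem_singleton_iff, mem_Ico, nearestRoot_coe]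
  rw [div_add_one (by positivity), div_le_iff₀ (by positivity), lt_div_iff₀ (by positivity),
    lt_div_iff₀ (by positivity), mul_comm x]
  have hlow := sub_half_lt_round ((n : ℝ) * x)
  have hupp := round_le_add_half ((n : ℝ) * x)
  constructor
  · rintro ⟨⟨hx₀, hx₁⟩, hx⟩
    have hm : (m : ℝ) < round ((n : ℝ) * x) + 1 := by linarith
    have hmn : (round ((n : ℝ) * x) : ℝ) < m + n := by linarith
    have hrm : round ((n : ℝ) * x) ∈ Ico m (m + n) :=
      ⟨Int.lt_add_one_iff.mp (by exact_mod_cast hm), by exact_mod_cast hmn⟩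
    exact round_eq_iff.mp (injOn_coe_intCast_div hn m hrm (left_mem_Ico.mpr (by omega)) hx)
  · rintro ⟨hx₀, hx₁⟩
    exact ⟨⟨hx₀, by linarith⟩, by rw [round_eq_iff.mpr ⟨hx₀, hx₁⟩]⟩

section Fiber

variable {n : ℕ} (hn : 0 < n) (m : ℤ)
include hn

lemma setIntegral_preimage_nearestRoot {E : Type*} [NormedAddCommGroup E] [NormedSpace ℝ E]
    (f : AddCircle (1 : ℝ) → E) :
    ∫ x in nearestRoot n ⁻¹' {((m / n : ℝ) : AddCircle (1 : ℝ))}, f x =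
      ∫ x in (m - 1 / 2) / n..(m + 1 / 2) / n, f x := by
  have hle : ((m - 1 / 2) / n : ℝ) ≤ (m + 1 / 2) / n := by gcongr; linarith
  rw [AddCircle.setIntegral_eq_setIntegral_Ico_inter_preimage ((m - 1 / 2) / n)
      (measurable_nearestRoot n (measurableSet_singleton _)),
    Ico_inter_coe_preimage_nearestRoot hn, integral_Ico_eq_integral_Ioc,
    intervalIntegral.integral_of_le hle]

lemma measureReal_preimage_nearestRoot :
    volume.real (nearestRoot n ⁻¹' {((m / n : ℝ) : AddCircle (1 : ℝ))}) = 1 / n := by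
  have h := setIntegral_preimage_nearestRoot hn m fun _ => (1 : ℝ)
  rw [setIntegral_const, intervalIntegral.integral_const, smul_eq_mul, smul_eq_mul, mul_one,
    mul_one] at h
  rw [h]
  ring

lemma setIntegral_fourier_preimage_nearestRoot (k : ℤ) :
    ∫ x in nearestRoot n ⁻¹' {((m / n : ℝ) : AddCircle (1 : ℝ))}, fourier k x =
      (1 / n : ℝ) • (sinc (k * Real.pi / n) * fourier k ((m / n : ℝ) : AddCircle (1 : ℝ))) := by
  have hshift : ∀ y : ℝ, fourier k ((y + m / n : ℝ) : AddCircle (1 : ℝ)) =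
      fourier k ((m / n : ℝ) : AddCircle (1 : ℝ)) *
        Complex.exp ((2 * Real.pi * k : ℝ) * y * Complex.I) := by
    intro y
    rw [fourier_coe_apply, fourier_coe_apply, ← Complex.exp_add]
    push_cast
    ring_nf
  calc ∫ x in nearestRoot n ⁻¹' {((m / n : ℝ) : AddCircle (1 : ℝ))}, fourier k x
      = ∫ y in -(1 / (2 * n) : ℝ)..1 / (2 * n),
          fourier k ((y + m / n : ℝ) : AddCircle (1 : ℝ)) := by
        rw [setIntegral_preimage_nearestRoot hn,
          intervalIntegral.integral_comp_add_right (fun x : ℝ => fourier k (x : AddCircle (1 : ℝ)))]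
        congr 1 <;> ring
    _ = fourier k ((m / n : ℝ) : AddCircle (1 : ℝ)) *
          (2 * (1 / (2 * n) : ℝ) * Real.sinc (2 * Real.pi * k * (1 / (2 * n)))) := by
        simp only [hshift, intervalIntegral.integral_const_mul, integral_exp_mul_mul_I_eq_sinc]
    _ = _ := by
        rw [sinc_eq_real_sinc, Complex.real_smul]
        field_simp
        push_cast
        ring

end Fiber

theorem condexp_fourier_nearestRoot (n : ℕ) (hn : 1 ≤ n) (k : ℤ) :
    (volume[fun x : AddCircle (1 : ℝ) => (fourier k x : ℂ) |
        MeasurableSpace.comap (nearestRoot n) inferInstance])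
      =ᵐ[volume]
    fun x : AddCircle (1 : ℝ) =>
      (sinc (k * Real.pi / n) : ℂ) * fourier k (nearestRoot n x) := by
  have hfourier : Integrable (fun x : AddCircle (1 : ℝ) => (fourier k x : ℂ)) :=
    (fourier k).continuous.integrable_of_hasCompactSupport (.of_compactSpace _)
  refine (condExp_comap_ae_eq_fiber_average (measurable_nearestRoot n)
    (finite_range_nearestRoot n) hfourier).trans (.of_forall fun x => ?_)
  obtain ⟨m, hm⟩ : ∃ m : ℤ, nearestRoot n x = ((m / n : ℝ) : AddCircle (1 : ℝ)) := ⟨_, rfl⟩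
  dsimp only
  rw [hm, measureReal_preimage_nearestRoot hn m, setIntegral_fourier_preimage_nearestRoot hn m k]
  exact inv_smul_smul₀ (by positivity) _
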